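/- Let q = 4f + 1 be a prime, let D_0, D_1, D_2, D_3 be the cyclotomic classes of order 4 in (Z/qZ)*, and set 𝔇_0 = D_0 ∪ D_2 and 𝔇_1 = D_1 ∪ D_3. Define the sequence a of period q by a_i = i^k (with i the imaginary unit, i.e., a primitive 4th root of unity) if i ∈ 𝔇_k for k ∈ {0,1}, and a_0 = 0. Then for every t with 1 ≤ t ≤ q−1, the autocorrelation C_a(t) = Σ_{j=0}^{q−1} a_j · conj(a_{j+t}) equals 2f − 1 = (q−3)/2. -/
import Mathlib

open Finset Subgroup Complex

/-- Jacobi-sum computation: `∑ j, χ(j) χ(j+t) = -1` for the quadratic character. -/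
lemma quadChar_shift_sum (q : ℕ) [Fact q.Prime] (hq2 : q ≠ 2) {t : ZMod q} (ht : t ≠ 0) :
    ∑ j : ZMod q, quadraticChar (ZMod q) j * quadraticChar (ZMod q) (j + t) = -1 := by
  have hF : ringChar (ZMod q) ≠ 2 := by rw [ZMod.ringChar_zmod_n]; exact hq2
  set χ := quadraticChar (ZMod q) with hχ
  have hnt : (-t) ≠ 0 := neg_ne_zero.mpr ht
  have h1 : ∑ x : ZMod q, χ (-t * x) * χ (-t * x + t)
      = ∑ j : ZMod q, χ j * χ (j + t) :=
    Fintype.sum_equiv (Equiv.mulLeft₀ (-t) hnt) _ _ (fun _ => rfl)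
  rw [← h1]
  have h2 : ∀ x : ZMod q, χ (-t * x) * χ (-t * x + t)
      = (χ (-t) * χ t) * (χ x * χ (1 - x)) := by
    intro x
    have hx : -t * x + t = t * (1 - x) := by ring
    rw [hx, map_mul, map_mul]
    ring
  simp only [h2]
  rw [← Finset.mul_sum]
  have hjac : ∑ x : ZMod q, χ x * χ (1 - x) = -χ (-1) := by
    have hinv : χ⁻¹ = χ := (quadraticChar_isQuadratic (ZMod q)).inv
    have := jacobiSum_nontrivial_inv (quadraticChar_ne_one hF)
    rw [hinv] at this
    exact this
  rw [hjac]
  have hm1 : (-1 : ZMod q) ≠ 0 := neg_ne_zero.mpr one_ne_zero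
  have e1 : χ (-t) = χ (-1) * χ t := by rw [← map_mul]; ring_nf
  have e2 : χ (-1) * χ (-1) = 1 := by
    have := quadraticChar_sq_one hm1; rwa [sq] at this
  have e3 : χ t * χ t = 1 := by
    have := quadraticChar_sq_one ht; rwa [sq] at this
  rw [e1]
  calc χ (-1) * χ t * χ t * -χ (-1) = -((χ (-1) * χ (-1)) * (χ t * χ t)) := by ring
  _ = -1 := by rw [e2, e3]; ring

/-- Let `q = 4f+1` be prime with cyclotomic classes `D_0, …, D_3` of order 4, and let
`a` be the almost quaternary sequence with `a_0 = 0`, `a_j = 1` on `D_0 ∪ D_2` and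
`a_j = i` on `D_1 ∪ D_3`. Then every out-of-phase autocorrelation coefficient of `a`
equals `2f - 1 = (q-3)/2`. -/
theorem quaternary_sequence_autocorrelation (q f : ℕ) [Fact q.Prime] (hq : q = 4 * f + 1)
    (α : ZMod q) (hα : orderOf α = q - 1)
    (D : ℕ → Finset (ZMod q))
    (hD : ∀ k, D k = (Finset.range f).image (fun i => α ^ (4 * i + k)))
    (a : ZMod q → ℂ) (ha0 : a 0 = 0)
    (ha1 : ∀ j ∈ D 0 ∪ D 2, a j = 1)
    (ha2 : ∀ j ∈ D 1 ∪ D 3, a j = Complex.I) :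
    ∀ t : ZMod q, t ≠ 0 →
      (∑ j : ZMod q, a j * starRingEnd ℂ (a (j + t))) = 2 * (f : ℂ) - 1 := by
  intro t ht
  have hp : q.Prime := Fact.out
  have hq2 : 2 ≤ q := hp.two_le
  have hf1 : 1 ≤ f := by
    rcases Nat.eq_zero_or_pos f with h | h
    · exfalso
      subst h
      simp only [Nat.mul_zero, Nat.zero_add] at hq
      rw [hq] at hp
      exact Nat.not_prime_one hp
    · exact h
  have hqne2 : q ≠ 2 := by omega
  have hq1 : q - 1 = 4 * f := by omega
  set χ := quadraticChar (ZMod q) with hχdef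
  -- α is a unit
  have hord : α ^ (q - 1) = 1 := hα ▸ pow_orderOf_eq_one α
  have hα0 : α ≠ 0 := by
    intro h
    rw [h, zero_pow (by omega : q - 1 ≠ 0)] at hord
    exact zero_ne_one hord
  obtain ⟨u, hu⟩ : IsUnit α := isUnit_iff_ne_zero.mpr hα0
  have hordu : orderOf u = 4 * f := by
    rw [← orderOf_units, hu, hα, hq1]
  -- u generates the unit group
  have htop : Subgroup.zpowers u = ⊤ := by
    apply Subgroup.eq_top_of_card_eq
    rw [Nat.card_zpowers, hordu, Nat.card_eq_fintype_card, ZMod.card_units q, hq1]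
  have hrep : ∀ x : (ZMod q)ˣ, ∃ r : ℕ, r < 4 * f ∧ u ^ r = x := by
    intro x
    have hx : x ∈ Submonoid.powers u := by
      rw [mem_powers_iff_mem_zpowers, htop]; exact Subgroup.mem_top x
    obtain ⟨n, hn⟩ := hx
    refine ⟨n % (4 * f), Nat.mod_lt _ (by omega), ?_⟩
    rw [← hordu, pow_mod_orderOf]
    exact hn
  -- square criterion
  have hsq_iff : ∀ r : ℕ, IsSquare ((u : (ZMod q)ˣ) ^ r) ↔ Even r := by
    intro r
    constructor
    · rintro ⟨y, hy⟩
      obtain ⟨s, _, hs⟩ := hrep y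
      rw [← hs, ← pow_add] at hy
      have hmod : r ≡ s + s [MOD orderOf u] := pow_eq_pow_iff_modEq.mp hy
      rw [hordu] at hmod
      have hdvd : ((4 * f : ℕ) : ℤ) ∣ ((s + s : ℕ) : ℤ) - (r : ℕ) :=
        Nat.modEq_iff_dvd.mp hmod
      obtain ⟨k, hk⟩ := hdvd
      have hre : (r : ℤ) = 2 * (s : ℤ) - 4 * (f : ℤ) * k := by push_cast at hk ⊢; linarith
      have : Even (r : ℤ) := ⟨(s : ℤ) - 2 * (f : ℤ) * k, by linarith⟩
      exact Int.even_coe_nat r |>.mp this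
    · rintro ⟨k, hk⟩
      exact ⟨u ^ k, by rw [← pow_add, hk]⟩
  -- membership in the cyclotomic classes
  have hmemD : ∀ r : ℕ, r < 4 * f → α ^ r ∈ D (r % 4) := by
    intro r hr
    rw [hD]
    refine Finset.mem_image.mpr ⟨r / 4, Finset.mem_range.mpr (by omega), ?_⟩
    congr 1
    omega
  -- the value of a in terms of the quadratic character
  set c : ZMod q → ℂ := fun j => ((χ j : ℤ) : ℂ) with hc
  have hcconj : ∀ j, starRingEnd ℂ (c j) = c j := by
    intro j; simp [hc]
  have hform : ∀ j : ZMod q,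
      a j = ((1 + Complex.I) * (c j) ^ 2 + (1 - Complex.I) * (c j)) / 2 := by
    intro j
    by_cases hj : j = 0
    · subst hj
      have h0 : χ (0 : ZMod q) = 0 := quadraticChar_zero
      rw [ha0]
      show (0 : ℂ) = ((1 + Complex.I) * ((χ (0 : ZMod q) : ℤ) : ℂ) ^ 2
        + (1 - Complex.I) * ((χ (0 : ZMod q) : ℤ) : ℂ)) / 2
      rw [h0]; norm_num
    · -- j is a power of u
      obtain ⟨x, hx⟩ : IsUnit j := isUnit_iff_ne_zero.mpr hj
      obtain ⟨r, hr, hur⟩ := hrep x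
      have hjr : j = α ^ r := by
        rw [← hx, ← hur, ← hu]; push_cast; rfl
      have hsq_units : IsSquare j ↔ Even r := by
        rw [← hsq_iff r, hur]
        constructor
        · rintro ⟨z, hz⟩
          have hz0 : z ≠ 0 := by
            intro h; rw [h, mul_zero] at hz; exact hj hz
          obtain ⟨zu, hzu⟩ : IsUnit z := isUnit_iff_ne_zero.mpr hz0
          exact ⟨zu, Units.ext (by rw [Units.val_mul, hzu, ← hz, hx])⟩
        · rintro ⟨y, hy⟩
          exact ⟨(y : ZMod q), by rw [← Units.val_mul, ← hy, hx]⟩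
      rcases Nat.even_or_odd r with he | ho
      · -- square case: a j = 1, χ j = 1
        have hmem : j ∈ D 0 ∪ D 2 := by
          have h4 : r % 4 = 0 ∨ r % 4 = 2 := by
            rcases he with ⟨k, hk⟩; omega
          have := hmemD r hr
          rcases h4 with h | h <;> rw [h] at this
          · exact Finset.mem_union_left _ (hjr ▸ this)
          · exact Finset.mem_union_right _ (hjr ▸ this)
        have hχ1 : χ j = 1 :=
          (quadraticChar_one_iff_isSquare hj).mpr (hsq_units.mpr he)
        have hχ1' : ((χ j : ℤ) : ℂ) = 1 := by rw [hχ1]; norm_num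
        rw [ha1 j hmem]
        show (1 : ℂ) = ((1 + Complex.I) * ((χ j : ℤ) : ℂ) ^ 2
          + (1 - Complex.I) * ((χ j : ℤ) : ℂ)) / 2
        rw [hχ1']; ring
      · -- nonsquare case: a j = I, χ j = -1
        have hmem : j ∈ D 1 ∪ D 3 := by
          have h4 : r % 4 = 1 ∨ r % 4 = 3 := by
            rcases ho with ⟨k, hk⟩; omega
          have := hmemD r hr
          rcases h4 with h | h <;> rw [h] at this
          · exact Finset.mem_union_left _ (hjr ▸ this)
          · exact Finset.mem_union_right _ (hjr ▸ this)
        have hχ1 : χ j = -1 := by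
          apply quadraticChar_neg_one_iff_not_isSquare.mpr
          intro hs
          exact (Nat.not_odd_iff_even.mpr (hsq_units.mp hs)) ho
        have hχ1' : ((χ j : ℤ) : ℂ) = -1 := by rw [hχ1]; norm_num
        rw [ha2 j hmem]
        show Complex.I = ((1 + Complex.I) * ((χ j : ℤ) : ℂ) ^ 2
          + (1 - Complex.I) * ((χ j : ℤ) : ℂ)) / 2
        rw [hχ1']; ring
  -- basic facts about c
  have hχzero : χ (0 : ZMod q) = 0 := quadraticChar_zero
  have hc0 : c 0 = 0 := by
    show ((χ (0 : ZMod q) : ℤ) : ℂ) = 0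
    rw [hχzero]; norm_num
  have hcsq : ∀ j : ZMod q, j ≠ 0 → (c j) ^ 2 = 1 := by
    intro j hj
    have h : χ j ^ 2 = 1 := quadraticChar_sq_one hj
    show ((χ j : ℤ) : ℂ) ^ 2 = 1
    exact_mod_cast h
  have hcneg : c (-t) = c t := by
    -- -1 is a square since α^(2f) = -1
    have h2f : α ^ (2 * f) = -1 := by
      have hsq : (α ^ (2 * f)) * (α ^ (2 * f)) = 1 := by
        rw [← pow_add]
        have : 2 * f + 2 * f = q - 1 := by omega
        rw [this, hord]
      have hne1 : α ^ (2 * f) ≠ 1 := by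
        intro h
        have := orderOf_dvd_of_pow_eq_one h
        rw [hα, hq1] at this
        have := Nat.le_of_dvd (by omega) this
        omega
      rcases mul_self_eq_one_iff.mp hsq with h | h
      · exact absurd h hne1
      · exact h
    have hsqm1 : IsSquare (-1 : ZMod q) := by
      refine ⟨α ^ f, ?_⟩
      rw [← h2f, ← pow_add]; congr 1; ring
    have hm1 : (-1 : ZMod q) ≠ 0 := neg_ne_zero.mpr one_ne_zero
    have hχm1 : χ (-1) = 1 := (quadraticChar_one_iff_isSquare hm1).mpr hsqm1
    have h : χ (-t) = χ (-1) * χ t := by rw [← map_mul]; ring_nf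
    show ((χ (-t) : ℤ) : ℂ) = ((χ t : ℤ) : ℂ)
    rw [h, hχm1, one_mul]
  -- the four partial sums
  have hzero : ∑ j : ZMod q, c j = 0 := by
    have hF : ringChar (ZMod q) ≠ 2 := by rw [ZMod.ringChar_zmod_n]; exact hqne2
    have := quadraticChar_sum_zero hF
    rw [hc]
    calc ∑ j : ZMod q, ((χ j : ℤ) : ℂ) = ((∑ j : ZMod q, χ j : ℤ) : ℂ) := by push_cast; rfl
    _ = 0 := by rw [this]; simp
  have hshift : ∑ j : ZMod q, c (j + t) = 0 := by
    rw [Fintype.sum_equiv (Equiv.addRight t) (fun j => c (j + t)) c (fun _ => rfl)]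
    exact hzero
  have hS1 : ∑ j : ZMod q, c j * c (j + t) = -1 := by
    have := quadChar_shift_sum q hqne2 ht
    rw [hc]
    calc ∑ j : ZMod q, ((χ j : ℤ) : ℂ) * ((χ (j + t) : ℤ) : ℂ)
        = ((∑ j : ZMod q, χ j * χ (j + t) : ℤ) : ℂ) := by push_cast; rfl
    _ = -1 := by rw [this]; simp
  have hS3 : ∑ j : ZMod q, (c j) ^ 2 * c (j + t) = -(c t) := by
    have hpt : ∀ j : ZMod q, (c j) ^ 2 * c (j + t)
        = c (j + t) - (if j = 0 then c t else 0) := by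
      intro j
      by_cases h : j = 0
      · simp [h, hc0]
      · rw [hcsq j h, if_neg h]; ring
    rw [Finset.sum_congr rfl (fun j _ => hpt j), Finset.sum_sub_distrib, hshift,
      Finset.sum_ite_eq' Finset.univ (0 : ZMod q) (fun _ => c t)]
    simp
  have hS4 : ∑ j : ZMod q, c j * (c (j + t)) ^ 2 = -(c t) := by
    have hpt : ∀ j : ZMod q, c j * (c (j + t)) ^ 2
        = c j - (if j = -t then c (-t) else 0) := by
      intro j
      by_cases h : j = -t
      · subst h
        have hjt : (-t) + t = 0 := by ring
        rw [hjt, hc0, if_pos rfl]; ring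
      · have hjt : j + t ≠ 0 := by
          intro h0; apply h; rw [← add_zero (-t), ← h0]; ring
        rw [hcsq _ hjt, if_neg h]; ring
    rw [Finset.sum_congr rfl (fun j _ => hpt j), Finset.sum_sub_distrib, hzero,
      Finset.sum_ite_eq' Finset.univ (-t : ZMod q) (fun _ => c (-t))]
    simp [hcneg]
  have hS2 : ∑ j : ZMod q, (c j) ^ 2 * (c (j + t)) ^ 2 = 4 * (f : ℂ) - 1 := by
    have hpt : ∀ j : ZMod q, (c j) ^ 2 * (c (j + t)) ^ 2
        = 1 - (if j = 0 then 1 else 0) - (if j = -t then 1 else 0) := by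
      intro j
      by_cases h : j = 0
      · subst h
        have h2 : (0 : ZMod q) ≠ -t := by
          intro h'; apply ht; rw [← neg_neg t, ← h']; ring
        rw [hc0, if_pos rfl, if_neg h2]; ring
      · by_cases h' : j = -t
        · subst h'
          have hjt : (-t) + t = 0 := by ring
          rw [hjt, hc0, hcsq _ h, if_neg h, if_pos rfl]; ring
        · have hjt : j + t ≠ 0 := by
            intro h0; apply h'; rw [← add_zero (-t), ← h0]; ring
          rw [hcsq j h, hcsq _ hjt, if_neg h, if_neg h']; ring
    rw [Finset.sum_congr rfl (fun j _ => hpt j)]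
    rw [Finset.sum_sub_distrib, Finset.sum_sub_distrib,
      Finset.sum_ite_eq' Finset.univ (0 : ZMod q) (fun _ => (1 : ℂ)),
      Finset.sum_ite_eq' Finset.univ (-t : ZMod q) (fun _ => (1 : ℂ))]
    simp only [Finset.mem_univ, if_true, Finset.sum_const, Finset.card_univ]
    rw [ZMod.card q]
    have : ((q : ℕ) : ℂ) = 4 * (f : ℂ) + 1 := by rw [hq]; push_cast; ring
    rw [nsmul_eq_mul, mul_one, this]; ring
  -- put everything together
  have hkey : ∀ x y : ℂ,
      (((1 + Complex.I) * x ^ 2 + (1 - Complex.I) * x) / 2) *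
        (((1 - Complex.I) * y ^ 2 + (1 + Complex.I) * y) / 2)
      = (1 / 2) * (x ^ 2 * y ^ 2) + (1 / 2) * (x * y)
        + (Complex.I / 2) * (x ^ 2 * y) - (Complex.I / 2) * (x * y ^ 2) := by
    intro x y
    linear_combination (x ^ 2 * y + x * y ^ 2 - x ^ 2 * y ^ 2 - x * y) / 4 * Complex.I_sq
  have hconjform : ∀ m : ZMod q, starRingEnd ℂ (a m)
      = ((1 - Complex.I) * (c m) ^ 2 + (1 + Complex.I) * (c m)) / 2 := by
    intro m
    rw [hform m]
    have h2 : (starRingEnd ℂ) 2 = 2 := map_ofNat _ 2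
    simp only [map_div₀, map_add, map_sub, map_mul, map_pow, map_one, Complex.conj_I,
      hcconj m, h2]
    ring
  calc ∑ j : ZMod q, a j * starRingEnd ℂ (a (j + t))
      = ∑ j : ZMod q, ((1 / 2) * ((c j) ^ 2 * (c (j + t)) ^ 2) + (1 / 2) * (c j * c (j + t))
        + (Complex.I / 2) * ((c j) ^ 2 * c (j + t))
        - (Complex.I / 2) * (c j * (c (j + t)) ^ 2)) := by
        refine Finset.sum_congr rfl (fun j _ => ?_)
        rw [hform j, hconjform (j + t), hkey]
  _ = (1 / 2) * (∑ j : ZMod q, (c j) ^ 2 * (c (j + t)) ^ 2)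
        + (1 / 2) * (∑ j : ZMod q, c j * c (j + t))
        + (Complex.I / 2) * (∑ j : ZMod q, (c j) ^ 2 * c (j + t))
        - (Complex.I / 2) * (∑ j : ZMod q, c j * (c (j + t)) ^ 2) := by
        rw [Finset.sum_sub_distrib, Finset.sum_add_distrib, Finset.sum_add_distrib,
          ← Finset.mul_sum, ← Finset.mul_sum, ← Finset.mul_sum, ← Finset.mul_sum]
  _ = 2 * (f : ℂ) - 1 := by rw [hS1, hS2, hS3, hS4]; ring
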